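/- For a rule-free program P (facts and integrity constraints only, where constraint bodies are negation-free), the operator Γ_P is monotone: I ⊑ I' implies Γ_P(I) ⊑ Γ_P(I'), and hence by the Knaster–Tarski theorem Γ_P has a least fixed point on the complete lattice of interpretations. -/

import Mathlib

/-- Network formulas over labels `L`. -/
inductive Formula (L : Type) where
  | atom : L → Set ℝ → Formula L
  | and : Formula L → Formula L → Formula L
  | or : Formula L → Formula L → Formula L
  | not : Formula L → Formula L

/-- Satisfaction of a formula by a world (assignment of bounds to labels). -/
def Sat {L : Type} (W : L → Set ℝ) : Formula L → Prop
  | .atom l bnd =>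
      bnd = Set.Icc 0 1 ∨ (bnd ≠ ∅ ∧ bnd ≠ Set.Icc 0 1 ∧ W l ⊆ bnd)
  | .and f g => Sat W f ∧ Sat W g
  | .or f g => Sat W f ∨ Sat W g
  | .not f => ¬ Sat W f

/-- Negation-free formulas. -/
def NegFree {L : Type} : Formula L → Prop
  | .atom _ _ => True
  | .and f g => NegFree f ∧ NegFree g
  | .or f g => NegFree f ∧ NegFree g
  | .not _ => False

/-- Interpretations: time → component → label → bound. -/
def Interp (G L : Type) := ℕ → G → L → Set ℝ

/-- `I ⊑ I'` iff every bound in `I'` is a subset of the corresponding bound in `I`. -/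
def ile {G L : Type} (I I' : Interp G L) : Prop :=
  ∀ t c lab, I' t c lab ⊆ I t c lab

/-- A MANCaLog fact `(⟨lab,bnd⟩,c):[t1,t2]`. -/
structure MFact (G L : Type) where
  lab : L
  bnd : Set ℝ
  c : G
  t1 : ℕ
  t2 : ℕ

/-- An integrity constraint `⟨lab,bnd⟩ ↩ body`. -/
structure IC (L : Type) where
  lab : L
  bnd : Set ℝ
  body : Formula L

/-- A rule-free program: facts and integrity constraints only. -/
structure RuleFreeProgram (G L : Type) where
  facts : List (MFact G L)
  ics : List (IC L)

/-- The `Γ_P` operator for a rule-free program: at `(t,c,lab)` intersect the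
previous bound with `FB` (bounds of applicable facts, independent of `I`) and
`IB` (head bounds of integrity constraints whose bodies `I(t)(c)` satisfies). -/
def Gamma {G L : Type} (P : RuleFreeProgram G L) (I : Interp G L) :
    Interp G L :=
  fun t c lab =>
    (I t c lab) ∩
    (⋂₀ {b | ∃ F ∈ P.facts, F.lab = lab ∧ F.c = c ∧ F.t1 ≤ t ∧ t ≤ F.t2 ∧ b = F.bnd}) ∩
    (⋂₀ {b | ∃ ic ∈ P.ics, ic.lab = lab ∧ Sat (I t c) ic.body ∧ b = ic.bnd})

/-! Satisfaction of a negation-free body can only be gained by tightening the bounds of a world,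
so a tighter interpretation triggers more integrity constraints and `Γ_P` intersects with more
head bounds; the fact bounds do not depend on the interpretation at all. Hence `Γ_P` is monotone
for `⊑`, and Knaster–Tarski gives its least fixed point. -/

theorem Sat.mono_of_negFree {L : Type} {W W' : L → Set ℝ} {f : Formula L} (hf : NegFree f)
    (hW : ∀ l, W' l ⊆ W l) (hsat : Sat W f) : Sat W' f := by
  induction f with
  | atom l bnd => exact hsat.imp_right fun ⟨hne, hnu, hsub⟩ => ⟨hne, hnu, (hW l).trans hsub⟩
  | and f g ihf ihg => exact ⟨ihf hf.1 hsat.1, ihg hf.2 hsat.2⟩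
  | or f g ihf ihg => exact hsat.imp (ihf hf.1) (ihg hf.2)
  | not f _ => exact hf.elim

-- `⊑` is pointwise reverse inclusion: a larger interpretation carries tighter bounds.
instance {G L : Type} : CompleteLattice (Interp G L) :=
  inferInstanceAs (CompleteLattice (ℕ → G → L → (Set ℝ)ᵒᵈ))

theorem ile_iff_le {G L : Type} {I I' : Interp G L} : ile I I' ↔ I ≤ I' := Iff.rfl

theorem Gamma_monotone {G L : Type} {P : RuleFreeProgram G L}
    (hics : ∀ ic ∈ P.ics, NegFree ic.body) : Monotone (Gamma P) := by
  intro I I' hII' t c lab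
  have triggered_mono : {b | ∃ ic ∈ P.ics, ic.lab = lab ∧ Sat (I t c) ic.body ∧ b = ic.bnd} ⊆
      {b | ∃ ic ∈ P.ics, ic.lab = lab ∧ Sat (I' t c) ic.body ∧ b = ic.bnd} :=
    fun _ ⟨ic, hic, hlab, hsat, hb⟩ =>
      ⟨ic, hic, hlab, Sat.mono_of_negFree (hics ic hic) (hII' t c) hsat, hb⟩
  exact Set.inter_subset_inter (Set.inter_subset_inter_left _ (hII' t c lab))
    (Set.sInter_subset_sInter triggered_mono)

/-- for a rule-free program whose constraint bodies are
negation-free, `Γ_P` is monotone w.r.t. `⊑`, and hence (Knaster–Tarski on the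
complete lattice of interpretations) it has a least fixed point. -/
theorem rulefree_gamma_monotone_lfp {G L : Type}
    (P : RuleFreeProgram G L) (hics : ∀ ic ∈ P.ics, NegFree ic.body) :
    (∀ I I' : Interp G L, ile I I' → ile (Gamma P I) (Gamma P I')) ∧
    (∃ I : Interp G L, Gamma P I = I ∧
      ∀ J : Interp G L, Gamma P J = J → ile I J) := by
  have hmono := Gamma_monotone hics
  refine ⟨fun I I' h => ile_iff_le.2 (hmono (ile_iff_le.1 h)), ?_⟩
  let Γ : Interp G L →o Interp G L := ⟨Gamma P, hmono⟩
  exact ⟨Γ.lfp, Γ.map_lfp, fun J hJ => ile_iff_le.2 (Γ.lfp_le_fixed hJ)⟩
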